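/- arXiv:2004.04858 — 2 statements merged into one kernel-verified Lean document; each statement's English description precedes it below -/
import Mathlib

section
/- Let S be a colored string of length n. For any fixed color y, delay d, and position j, there is at most one minimally (y,d)-unique substring of S whose occurrences include one ending at position j. Consequently, the total number of pairs (T,d) with T a minimally (y,d)-unique substring of S, over all colors y and all delays d ∈ {0,...,n}, is O(n²) (at most (n+1)·n pairs counting each distinct substring once per delay). -/
variable {α γ : Type*}

/-- `occAt S T i` : the string `T` occurs in `S` at (1-based) position `i`. -/
def occAt (S T : List α) (i : ℕ) : Prop := 1 ≤ i ∧ T <+: S.drop (i - 1)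

/-- The occurrence of `T` at position `i` is `(y,d)`-good: the color at distance `d`
after the end position `i + |T| - 1` is `y`. -/
def goodOcc (f : ℕ → γ) (T : List α) (y : γ) (d i : ℕ) : Prop :=
  f (i + T.length - 1 + d) = y

/-- `T` is `(y,d)`-unique in the colored string `(S, f)`: every occurrence is
`(y,d)`-good or its color position lies beyond the end of the string. -/
def ydUnique (S : List α) (f : ℕ → γ) (T : List α) (y : γ) (d : ℕ) : Prop :=
  ∀ i, occAt S T i → (goodOcc f T y d i ∨ i + T.length - 1 + d > S.length)

/-- `T` is minimally `(y,d)`-unique: it is `(y,d)`-unique and no proper substring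
`U = T[i..j]` of `T` is `(y, d + |T| - j)`-unique. -/
def minYdUnique (S : List α) (f : ℕ → γ) (T : List α) (y : γ) (d : ℕ) : Prop :=
  ydUnique S f T y d ∧
  ∀ i j : ℕ, 1 ≤ i → i ≤ j → j ≤ T.length → ¬(i = 1 ∧ j = T.length) →
    ¬ ydUnique S f ((T.drop (i - 1)).take (j - i + 1)) y (d + T.length - j)

/-!
Two occurrences ending at the same position make the shorter string a suffix of the longer one.
If the longer string is minimally `(y,d)`-unique, that proper suffix is not `(y,d)`-unique, so two
minimally unique strings with the same colour, delay and end position coincide. For the count,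
key `(T, d)` by `d` and the end `e` of the leftmost occurrence of `T`. Colours do not spoil
injectivity: if `e + d ≤ n` both colours equal `f (e + d)`, and otherwise no occurrence of the
shorter string reaches a colour position at all. The key takes at most `(n + 1) * n` values.
-/

theorem occAt.add_length_le {S T : List α} {i : ℕ} (h : occAt S T i) (hT : T ≠ []) :
    i + T.length ≤ S.length + 1 := by
  have hlen := h.2.length_le
  rw [List.length_drop] at hlen
  have := List.length_pos_iff.mpr hT
  omega

theorem occAt.drop {S T : List α} {i : ℕ} (h : occAt S T i) (k : ℕ) :
    occAt S (T.drop k) (i + k) := by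
  have hi := h.1
  refine ⟨by omega, ?_⟩
  have hS : S.drop (i + k - 1) = (S.drop (i - 1)).drop k := by
    rw [List.drop_drop]
    congr 1
    omega
  exact hS ▸ h.2.drop k

theorem eq_drop_of_occAt_of_add_length_eq {S T₁ T₂ : List α} {i₁ i₂ : ℕ}
    (h₁ : occAt S T₁ i₁) (h₂ : occAt S T₂ i₂) (hle : T₁.length ≤ T₂.length)
    (hend : i₁ + T₁.length = i₂ + T₂.length) :
    T₁ = T₂.drop (T₂.length - T₁.length) := by
  have h₂' := h₂.drop (T₂.length - T₁.length)
  have hlen : (T₂.drop (T₂.length - T₁.length)).length = T₁.length := by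
    rw [List.length_drop]
    omega
  have hpos : i₂ + (T₂.length - T₁.length) = i₁ := by omega
  rw [hpos] at h₂'
  exact (List.prefix_of_prefix_length_le h₁.2 h₂'.2 hlen.ge).eq_of_length hlen.symm

theorem List.IsInfix.exists_occAt {S T : List α} (h : T <:+: S) : ∃ i, occAt S T i := by
  obtain ⟨s, t, rfl⟩ := h
  refine ⟨s.length + 1, Nat.le_add_left 1 s.length, t, ?_⟩
  rw [Nat.add_sub_cancel, List.append_assoc, List.drop_left]

theorem ydUnique.color_eq {S : List α} {f : ℕ → γ} {T : List α} {y : γ} {d i : ℕ}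
    (hu : ydUnique S f T y d) (ho : occAt S T i) (hle : i + T.length - 1 + d ≤ S.length) :
    f (i + T.length - 1 + d) = y :=
  (hu i ho).resolve_right (by omega)

theorem minYdUnique.not_ydUnique_drop {S : List α} {f : ℕ → γ} {T : List α} {y : γ} {d k : ℕ}
    (hm : minYdUnique S f T y d) (hk₀ : 0 < k) (hk : k < T.length) :
    ¬ ydUnique S f (T.drop k) y d := by
  have h := hm.2 (k + 1) T.length (by omega) (by omega) le_rfl (by omega)
  rwa [Nat.add_sub_cancel, show T.length - (k + 1) + 1 = T.length - k by omega,
    List.take_of_length_le (by rw [List.length_drop]), Nat.add_sub_cancel] at h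

theorem eq_of_ydUnique_of_minYdUnique {S : List α} {f : ℕ → γ} {T₁ T₂ : List α} {y : γ}
    {d i₁ i₂ : ℕ} (hT₁ : T₁ ≠ []) (hu₁ : ydUnique S f T₁ y d) (hm₂ : minYdUnique S f T₂ y d)
    (ho₁ : occAt S T₁ i₁) (ho₂ : occAt S T₂ i₂) (hle : T₁.length ≤ T₂.length)
    (hend : i₁ + T₁.length = i₂ + T₂.length) : T₁ = T₂ := by
  have hsuffix := eq_drop_of_occAt_of_add_length_eq ho₁ ho₂ hle hend
  obtain hlen | hlt := hle.eq_or_lt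
  · rwa [hlen, Nat.sub_self, List.drop_zero] at hsuffix
  · have hpos := List.length_pos_iff.mpr hT₁
    exact absurd (hsuffix ▸ hu₁) (hm₂.not_ydUnique_drop (by omega) (by omega))

theorem eq_of_minYdUnique_of_add_length_eq {S : List α} {f : ℕ → γ} {T₁ T₂ : List α} {y : γ}
    {d i₁ i₂ : ℕ} (hT₁ : T₁ ≠ []) (hT₂ : T₂ ≠ []) (hm₁ : minYdUnique S f T₁ y d)
    (hm₂ : minYdUnique S f T₂ y d) (ho₁ : occAt S T₁ i₁) (ho₂ : occAt S T₂ i₂)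
    (hend : i₁ + T₁.length = i₂ + T₂.length) : T₁ = T₂ := by
  rcases le_total T₁.length T₂.length with hle | hle
  · exact eq_of_ydUnique_of_minYdUnique hT₁ hm₁.1 hm₂ ho₁ ho₂ hle hend
  · exact (eq_of_ydUnique_of_minYdUnique hT₂ hm₂.1 hm₁ ho₂ ho₁ hle hend.symm).symm

/-- The position of the leftmost occurrence of `T` in `S` (junk value `0` if there is none). -/
noncomputable def firstOcc (S T : List α) : ℕ := sInf {i | occAt S T i}

theorem occAt_firstOcc {S T : List α} {i : ℕ} (h : occAt S T i) : occAt S T (firstOcc S T) :=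
  Nat.sInf_mem (s := {i | occAt S T i}) ⟨i, h⟩

theorem firstOcc_le {S T : List α} {i : ℕ} (h : occAt S T i) : firstOcc S T ≤ i :=
  Nat.sInf_le h

theorem ydUnique_of_firstOcc_add_length_eq {S : List α} {f : ℕ → γ} {T₁ T₂ : List α}
    {y₁ y₂ : γ} {d : ℕ} (hu₁ : ydUnique S f T₁ y₁ d) (hu₂ : ydUnique S f T₂ y₂ d)
    (hT₂ : T₂ <:+: S) (hend : firstOcc S T₁ + T₁.length = firstOcc S T₂ + T₂.length) :
    ydUnique S f T₁ y₂ d := by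
  intro i ho
  refine or_iff_not_imp_right.mpr fun hin => ?_
  have ho₁ := occAt_firstOcc ho
  obtain ⟨i₂, ho₂⟩ := hT₂.exists_occAt
  have ho₂ := occAt_firstOcc ho₂
  have hle := firstOcc_le ho
  have := ho₁.1
  have := ho₂.1
  have hy₁ := hu₁.color_eq ho₁ (by omega)
  have hy₂ := hu₂.color_eq ho₂ (by omega)
  rw [show firstOcc S T₂ + T₂.length - 1 + d = firstOcc S T₁ + T₁.length - 1 + d by omega,
    hy₁] at hy₂
  exact hy₂ ▸ hu₁.color_eq ho (by omega)

def minimalPairs (S : List α) (f : ℕ → γ) : Set (List α × ℕ) :=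
  {p | p.1 ≠ [] ∧ p.1 <:+: S ∧ p.2 ≤ S.length ∧ ∃ y : γ, minYdUnique S f p.1 y p.2}

noncomputable def delayEndKey (S : List α) (p : List α × ℕ) : ℕ × ℕ :=
  (p.2, firstOcc S p.1 + p.1.length)

theorem mapsTo_delayEndKey_minimalPairs (S : List α) (f : ℕ → γ) :
    Set.MapsTo (delayEndKey S) (minimalPairs S f)
      (Finset.range (S.length + 1) ×ˢ Finset.Icc 2 (S.length + 1) : Finset (ℕ × ℕ)) := by
  rintro p ⟨hT, hinf, hd, -⟩
  obtain ⟨i, ho⟩ := hinf.exists_occAt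
  have ho₁ := occAt_firstOcc ho
  have := ho₁.1
  have := ho₁.add_length_le hT
  have := List.length_pos_iff.mpr hT
  simp only [delayEndKey, Finset.coe_product, Set.mem_prod, Finset.mem_coe, Finset.mem_range,
    Finset.mem_Icc]
  omega

theorem injOn_delayEndKey_minimalPairs (S : List α) (f : ℕ → γ) :
    Set.InjOn (delayEndKey S) (minimalPairs S f) := by
  rintro ⟨T₁, d⟩ ⟨hT₁, hinf₁, -, y₁, hm₁⟩ ⟨T₂, d'⟩ ⟨hT₂, hinf₂, -, y₂, hm₂⟩ hkey
  obtain ⟨rfl : d = d', hend⟩ := Prod.mk.inj hkey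
  obtain ⟨i₁, ho₁⟩ := hinf₁.exists_occAt
  obtain ⟨i₂, ho₂⟩ := hinf₂.exists_occAt
  have hT : T₁ = T₂ := by
    rcases le_total T₁.length T₂.length with hle | hle
    · exact eq_of_ydUnique_of_minYdUnique hT₁
        (ydUnique_of_firstOcc_add_length_eq hm₁.1 hm₂.1 hinf₂ hend) hm₂
        (occAt_firstOcc ho₁) (occAt_firstOcc ho₂) hle hend
    · exact (eq_of_ydUnique_of_minYdUnique hT₂
        (ydUnique_of_firstOcc_add_length_eq hm₂.1 hm₁.1 hinf₁ hend.symm) hm₁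
        (occAt_firstOcc ho₂) (occAt_firstOcc ho₁) hle hend.symm).symm
  rw [hT]

theorem finite_minimalPairs (S : List α) (f : ℕ → γ) : (minimalPairs S f).Finite :=
  Set.Finite.of_injOn (mapsTo_delayEndKey_minimalPairs S f) (injOn_delayEndKey_minimalPairs S f)
    (Finset.finite_toSet _)

theorem ncard_minimalPairs_le (S : List α) (f : ℕ → γ) :
    (minimalPairs S f).ncard ≤ (S.length + 1) * S.length := by
  calc (minimalPairs S f).ncard
      ≤ ((Finset.range (S.length + 1) ×ˢ Finset.Icc 2 (S.length + 1) : Finset (ℕ × ℕ)) :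
          Set (ℕ × ℕ)).ncard :=
        Set.ncard_le_ncard_of_injOn _ (mapsTo_delayEndKey_minimalPairs S f)
          (injOn_delayEndKey_minimalPairs S f) (Finset.finite_toSet _)
    _ = (S.length + 1) * S.length := by
        rw [Set.ncard_coe_finset, Finset.card_product, Finset.card_range, Nat.card_Icc]
        rfl

theorem minimal_count_quadratic (S : List α) (f : ℕ → γ) :
    (∀ (y : γ) (d j : ℕ) (T₁ T₂ : List α), T₁ ≠ [] → T₂ ≠ [] →
        minYdUnique S f T₁ y d → (∃ i, occAt S T₁ i ∧ i + T₁.length - 1 = j) →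
        minYdUnique S f T₂ y d → (∃ i, occAt S T₂ i ∧ i + T₂.length - 1 = j) →
        T₁ = T₂) ∧
    {p : List α × ℕ | p.1 ≠ [] ∧ p.1 <:+: S ∧ p.2 ≤ S.length ∧
        ∃ y : γ, minYdUnique S f p.1 y p.2}.Finite ∧
    {p : List α × ℕ | p.1 ≠ [] ∧ p.1 <:+: S ∧ p.2 ≤ S.length ∧
        ∃ y : γ, minYdUnique S f p.1 y p.2}.ncard ≤ (S.length + 1) * S.length := by
  refine ⟨?_, finite_minimalPairs S f, ncard_minimalPairs_le S f⟩
  rintro y d j T₁ T₂ hT₁ hT₂ hm₁ ⟨i₁, ho₁, rfl⟩ hm₂ ⟨i₂, ho₂, hend⟩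
  have := ho₁.1
  have := ho₂.1
  exact eq_of_minYdUnique_of_add_length_eq hT₁ hT₂ hm₁ hm₂ ho₁ ho₂ (by omega)
end

section
/- A (y,d)-unique substring T = aXb of S (with a,b single characters and X a string) is minimally (y,d)-unique if and only if T is left-minimal (i.e., Xb is not (y,d)-unique) and right-minimal (i.e., aX is not (y,d+1)-unique). -/
variable {α γ : Type*}

lemma ydUnique_super (S : List α) (f : ℕ → γ) (P U V : List α) (y : γ) (d' : ℕ)
    (hV : V.length ≤ d') (h : ydUnique S f U y d') :
    ydUnique S f (P ++ U ++ V) y (d' - V.length) := by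
  rintro i ⟨hi, t, ht⟩
  have h2 : S.drop (i + P.length - 1) = U ++ (V ++ t) := by
    have e : i + P.length - 1 = (i - 1) + P.length := by omega
    rw [e, ← List.drop_drop, ← ht]
    simp
  have hocc : occAt S U (i + P.length) := ⟨by omega, ⟨V ++ t, by rw [h2]⟩⟩
  rcases h _ hocc with hg | hb
  · left
    unfold goodOcc at hg ⊢
    convert hg using 2
    simp only [List.length_append]
    omega
  · right
    simp only [List.length_append]
    omega

lemma decomp (L : List α) (m k : ℕ) :
    L = L.take m ++ (L.drop m).take k ++ L.drop (m + k) := by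
  conv_lhs => rw [← List.take_append_drop m L, ← List.take_append_drop k (L.drop m)]
  rw [List.drop_drop, List.append_assoc]

theorem minimal_iff_left_and_right_minimal
    (S X : List α) (a b : α) (f : ℕ → γ) (y : γ) (d : ℕ)
    (hsub : (a :: (X ++ [b])) <:+: S)
    (hU : ydUnique S f (a :: (X ++ [b])) y d) :
    minYdUnique S f (a :: (X ++ [b])) y d ↔
      (¬ ydUnique S f (X ++ [b]) y d ∧ ¬ ydUnique S f (a :: X) y (d + 1)) := by
  have hTlen : (a :: (X ++ [b])).length = X.length + 2 := by simp
  constructor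
  · rintro ⟨-, hmin⟩
    constructor
    · have h := hmin 2 (X.length + 2) (by omega) (by simp) (by simp) (by omega)
      rw [hTlen] at h
      convert h using 2
      · simp
      · omega
    · have h := hmin 1 (X.length + 1) (by omega) (by omega) (by simp) (by omega)
      rw [hTlen] at h
      convert h using 2
      · show a :: X = ((a :: X) ++ [b]).take (X.length + 1 - 1 + 1)
        rw [List.take_append_of_le_length (by simp)]
        simp
      · omega
  · rintro ⟨hL, hR⟩
    refine ⟨hU, ?_⟩
    intro i j hi hij hjn hne hUU
    rw [hTlen] at hjn hUU
    by_cases hi2 : 2 ≤ i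
    · apply hL
      have eU : ((a :: (X ++ [b])).drop (i - 1)).take (j - i + 1)
          = ((X ++ [b]).drop (i - 2)).take (j - i + 1) := by
        have e : i - 1 = (i - 2) + 1 := by omega
        rw [e]
        rfl
      rw [eU] at hUU
      have key := ydUnique_super S f ((X ++ [b]).take (i - 2))
        (((X ++ [b]).drop (i - 2)).take (j - i + 1)) ((X ++ [b]).drop (j - 1))
        y (d + (X.length + 2) - j)
        (by simp; omega) hUU
      have e2 : j - 1 = (i - 2) + (j - i + 1) := by omega
      rw [e2] at key
      rw [← decomp (X ++ [b]) (i - 2) (j - i + 1)] at key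
      convert key using 2
      simp
      omega
    · have hi1 : i = 1 := by omega
      subst hi1
      have hjlt : j ≤ X.length + 1 := by
        rcases Nat.lt_or_ge j (X.length + 2) with h | h
        · omega
        · exact absurd ⟨rfl, by omega⟩ hne
      apply hR
      have eU : ((a :: (X ++ [b])).drop (1 - 1)).take (j - 1 + 1)
          = (a :: X).take j := by
        have e : j - 1 + 1 = j := by omega
        rw [e]
        show ((a :: X) ++ [b]).take j = (a :: X).take j
        rw [List.take_append_of_le_length (by simpa using hjlt)]
      rw [eU] at hUU
      have key := ydUnique_super S f [] ((a :: X).take j) ((a :: X).drop j)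
        y (d + (X.length + 2) - j) (by simp; omega) hUU
      rw [List.nil_append, List.take_append_drop] at key
      have h1 : ((a :: X).drop j).length = X.length + 1 - j := by simp
      rw [h1, show d + (X.length + 2) - j - (X.length + 1 - j) = d + 1 by omega] at key
      exact key
end
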